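/- Let λ be a nontrivial additive character of F_q, χ a multiplicative character of F_q^*, and U ∈ GL_n(F_q) (i.e., rank u = n). Then G_{GL_n}(U, χ, λ) := ∑_{X ∈ GL_n(F_q)} χ(det X) λ(tr(U^t X)) = χ̄(det U) · q^{n(n-1)/2} · G(χ, λ)^n, where G(χ, λ) is the classical Gauss sum and χ̄ is the inverse character. -/

import Mathlib

open Matrix Finset

set_option linter.unusedSectionVars false
set_option maxHeartbeats 1000000

section Aux

variable {F : Type} [Field F] [Fintype F] [DecidableEq F]

private lemma addChar_map_sum {ι : Type*} (ψ : AddChar F ℂ) (s : Finset ι) (f : ι → F) :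
    ψ (∑ i ∈ s, f i) = ∏ i ∈ s, ψ (f i) := by
  classical
  induction s using Finset.induction_on with
  | empty => simp
  | insert _ _ h ih => rw [sum_insert h, prod_insert h, ψ.map_add_eq_mul, ih]

private lemma vec_sum (lam : AddChar F ℂ) (hlam : lam ≠ 1) {n : ℕ} (w : Fin n → F) :
    ∑ v : Fin n → F, lam (∑ j, v j * w j)
      = if w = 0 then (Fintype.card F : ℂ) ^ n else 0 := by
  simp_rw [addChar_map_sum]
  rw [← Fintype.piFinset_univ, ← Finset.prod_univ_sum (fun _ => univ)
      (fun j x => lam (x * w j))]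
  have h1 : ∀ j, ∑ x : F, lam (x * w j) = if w j = 0 then (Fintype.card F : ℂ) else 0 := by
    intro j
    exact_mod_cast AddChar.sum_mulShift (w j) (AddChar.IsPrimitive.of_ne_one hlam)
  simp_rw [h1]
  by_cases hw : w = 0
  · simp [hw, Finset.prod_const, Finset.card_univ]
  · obtain ⟨j, hj⟩ : ∃ j, w j ≠ 0 := by
      by_contra h; push_neg at h; exact hw (funext h)
    rw [if_neg hw]
    exact Finset.prod_eq_zero (mem_univ j) (by simp [hj])

private def blockEquiv (n : ℕ) :
    (Matrix (Fin n) (Fin n) F × Matrix (Fin n) (Fin 1) F ×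
      Matrix (Fin 1) (Fin n) F × Matrix (Fin 1) (Fin 1) F) ≃
      Matrix (Fin n ⊕ Fin 1) (Fin n ⊕ Fin 1) F where
  toFun p := fromBlocks p.1 p.2.1 p.2.2.1 p.2.2.2
  invFun X := (X.toBlocks₁₁, X.toBlocks₁₂, X.toBlocks₂₁, X.toBlocks₂₂)
  left_inv p := by
    simp [toBlocks_fromBlocks₁₁, toBlocks_fromBlocks₁₂, toBlocks_fromBlocks₂₁,
      toBlocks_fromBlocks₂₂]
  right_inv X := fromBlocks_toBlocks X

private def scalarEquiv : F ≃ Matrix (Fin 1) (Fin 1) F where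
  toFun x := Matrix.of fun _ _ => x
  invFun M := M 0 0
  left_inv x := rfl
  right_inv M := by ext i j; fin_cases i; fin_cases j; rfl

private def rowEquiv (n : ℕ) : (Fin n → F) ≃ Matrix (Fin 1) (Fin n) F where
  toFun v := Matrix.of fun _ j => v j
  invFun C := fun j => C 0 j
  left_inv v := rfl
  right_inv C := by ext i j; have : i = 0 := Subsingleton.elim i 0; rw [this]; rfl

private lemma gauss_one (χ : MulChar F ℂ) (lam : AddChar F ℂ) :
    ∑ D : Matrix (Fin 1) (Fin 1) F, χ D.det * lam D.trace = gaussSum χ lam := by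
  rw [gaussSum]
  refine (Fintype.sum_equiv scalarEquiv _ _ fun x => ?_).symm
  simp [scalarEquiv, Matrix.det_fin_one, Matrix.trace_fin_one]
  rfl

private lemma trace_fromBlocks' {n : ℕ}
    (A : Matrix (Fin n) (Fin n) F) (B : Matrix (Fin n) (Fin 1) F)
    (C : Matrix (Fin 1) (Fin n) F) (D : Matrix (Fin 1) (Fin 1) F) :
    (fromBlocks A B C D).trace = A.trace + D.trace := by
  simp [Matrix.trace, Fintype.sum_sum_type, fromBlocks, Matrix.diag]

private lemma row_sum (lam : AddChar F ℂ) (hlam : lam ≠ 1) {n : ℕ}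
    (N : Matrix (Fin n) (Fin 1) F) :
    ∑ C : Matrix (Fin 1) (Fin n) F, lam ((C * N).trace)
      = if N = 0 then (Fintype.card F : ℂ) ^ n else 0 := by
  rw [← (Fintype.sum_equiv (rowEquiv n)
      (fun v => lam (((rowEquiv n v : Matrix (Fin 1) (Fin n) F) * N).trace))
      (fun C => lam ((C * N).trace)) (fun v => rfl))]
  have h1 : ∀ v : Fin n → F, ((rowEquiv n v : Matrix (Fin 1) (Fin n) F) * N).trace
      = ∑ j, v j * N j 0 := by
    intro v
    rw [Matrix.trace_fin_one, Matrix.mul_apply]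
    rfl
  simp_rw [h1, vec_sum lam hlam fun j => N j 0]
  congr 1
  apply propext
  constructor
  · intro h
    ext j i
    have : i = 0 := Subsingleton.elim i 0
    rw [this]
    exact congrFun h j
  · intro h; ext j; rw [h]; rfl

private lemma singular_part (χ : MulChar F ℂ) (lam : AddChar F ℂ) (hlam : lam ≠ 1) {n : ℕ}
    (A : Matrix (Fin n) (Fin n) F) (hA : ¬ IsUnit A.det) (C : Matrix (Fin 1) (Fin n) F) :
    ∑ B : Matrix (Fin n) (Fin 1) F, ∑ D : Matrix (Fin 1) (Fin 1) F,
      χ (fromBlocks A B C D).det * lam (A.trace + D.trace) = 0 := by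
  by_cases hC : C = 0
  · refine Finset.sum_eq_zero fun B _ => Finset.sum_eq_zero fun D _ => ?_
    subst hC
    rw [det_fromBlocks_zero₂₁]
    have : ¬ IsUnit (A.det * D.det) := fun h => hA (isUnit_of_mul_isUnit_left h)
    rw [χ.map_nonunit this, zero_mul]
  · obtain ⟨y, hy⟩ := AddChar.ne_one_iff.mp hlam
    obtain ⟨i, j, hj⟩ : ∃ i j, C i j ≠ 0 := by
      by_contra h; push_neg at h; exact hC (by ext i j; simp [h])
    have hj0 : C 0 j ≠ 0 := by
      have : i = 0 := Subsingleton.elim i 0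
      rwa [this] at hj
    set s : Matrix (Fin n) (Fin 1) F := Matrix.of fun k _ => if k = j then (C 0 j)⁻¹ * y else 0
      with hs
    have htr : (C * s).trace = y := by
      rw [Matrix.trace_fin_one, Matrix.mul_apply]
      rw [Finset.sum_eq_single j]
      · simp only [hs, Matrix.of_apply, if_pos]
        field_simp
      · intro k _ hk; simp [hs, hk]
      · simp
    set f : Matrix (Fin n) (Fin 1) F → Matrix (Fin 1) (Fin 1) F → ℂ :=
      fun B D => χ (fromBlocks A B C D).det * lam (A.trace + D.trace) with hf
    have shift : ∀ B D, f (B + A * s) (D + C * s) = lam y * f B D := by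
      intro B D
      have hdet : fromBlocks A (B + A * s) C (D + C * s)
          = fromBlocks A B C D * fromBlocks 1 s 0 1 := by
        rw [fromBlocks_multiply]; simp [add_comm]
      have hdet2 : (fromBlocks A (B + A * s) C (D + C * s)).det
          = (fromBlocks A B C D).det := by
        rw [hdet, det_mul, det_fromBlocks_zero₂₁]
        simp
      rw [hf]
      simp only []
      rw [hdet2, trace_add, ← add_assoc, lam.map_add_eq_mul, htr]
      ring
    have key : ∑ B, ∑ D, f B D = lam y * (∑ B, ∑ D, f B D) := by
      conv_lhs => rw [← Equiv.sum_comp (Equiv.addRight (A * s)) (fun B => ∑ D, f B D)]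
      have h2 : ∀ B, ∑ D, f (B + A * s) D = ∑ D, f (B + A * s) (D + C * s) := by
        intro B
        rw [← Equiv.sum_comp (Equiv.addRight (C * s)) (fun D => f (B + A * s) D)]
        rfl
      simp_rw [Equiv.coe_addRight, h2, shift, ← Finset.mul_sum]
    have h0 : (lam y - 1) * (∑ B, ∑ D, f B D) = 0 := by
      rw [sub_mul, one_mul, ← key, sub_self]
    rcases mul_eq_zero.mp h0 with h | h
    · exact absurd (sub_eq_zero.mp h) hy
    · exact h

private lemma inv_part (χ : MulChar F ℂ) (lam : AddChar F ℂ) (hlam : lam ≠ 1) {n : ℕ}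
    (A : Matrix (Fin n) (Fin n) F) (hA : IsUnit A.det) :
    ∑ B : Matrix (Fin n) (Fin 1) F, ∑ C : Matrix (Fin 1) (Fin n) F,
      ∑ D : Matrix (Fin 1) (Fin 1) F,
        χ (fromBlocks A B C D).det * lam (A.trace + D.trace)
      = (Fintype.card F : ℂ) ^ n * gaussSum χ lam * (χ A.det * lam A.trace) := by
  letI := A.invertibleOfIsUnitDet hA
  have hDsum : ∀ (B : Matrix (Fin n) (Fin 1) F) (C : Matrix (Fin 1) (Fin n) F),
      ∑ D : Matrix (Fin 1) (Fin 1) F, χ (fromBlocks A B C D).det * lam (A.trace + D.trace)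
      = χ A.det * lam A.trace * lam ((C * (⅟A * B)).trace) * gaussSum χ lam := by
    intro B C
    rw [← (Fintype.sum_equiv (Equiv.addRight (C * ⅟A * B))
        (fun D => χ (fromBlocks A B C (D + C * ⅟A * B)).det
          * lam (A.trace + (D + C * ⅟A * B).trace))
        (fun D => χ (fromBlocks A B C D).det * lam (A.trace + D.trace)) (fun D => rfl))]
    have hsummand : ∀ D : Matrix (Fin 1) (Fin 1) F,
        χ (fromBlocks A B C (D + C * ⅟A * B)).det * lam (A.trace + (D + C * ⅟A * B).trace)
        = (χ A.det * lam A.trace * lam ((C * (⅟A * B)).trace)) * (χ D.det * lam D.trace) := by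
      intro D
      rw [det_fromBlocks₁₁, add_sub_cancel_right, map_mul χ, trace_add,
        lam.map_add_eq_mul, lam.map_add_eq_mul, Matrix.mul_assoc]
      ring
    simp_rw [hsummand, ← Finset.mul_sum, gauss_one]
  simp_rw [hDsum]
  have hCsum : ∀ B : Matrix (Fin n) (Fin 1) F,
      ∑ C : Matrix (Fin 1) (Fin n) F,
        χ A.det * lam A.trace * lam ((C * (⅟A * B)).trace) * gaussSum χ lam
      = χ A.det * lam A.trace * gaussSum χ lam *
          (if (⅟A * B : Matrix (Fin n) (Fin 1) F) = 0
            then (Fintype.card F : ℂ) ^ n else 0) := by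
    intro B
    have := row_sum lam hlam (⅟A * B)
    calc ∑ C : Matrix (Fin 1) (Fin n) F,
          χ A.det * lam A.trace * lam ((C * (⅟A * B)).trace) * gaussSum χ lam
        = χ A.det * lam A.trace * gaussSum χ lam *
            ∑ C : Matrix (Fin 1) (Fin n) F, lam ((C * (⅟A * B)).trace) := by
          rw [Finset.mul_sum]; apply Finset.sum_congr rfl; intro C _; ring
      _ = _ := by rw [this]
  simp_rw [hCsum]
  have hB0 : ∀ B : Matrix (Fin n) (Fin 1) F,
      ((⅟A * B : Matrix (Fin n) (Fin 1) F) = 0) ↔ B = 0 := by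
    intro B
    constructor
    · intro h
      calc B = (A * ⅟A) * B := by rw [mul_invOf_self, Matrix.one_mul]
        _ = A * (⅟A * B) := by rw [Matrix.mul_assoc]
        _ = 0 := by rw [h, Matrix.mul_zero]
    · intro h; rw [h, Matrix.mul_zero]
  simp_rw [hB0]
  simp_rw [mul_ite, mul_zero]
  rw [Finset.sum_ite_eq' univ (0 : Matrix (Fin n) (Fin 1) F)
    (fun _ => χ A.det * lam A.trace * gaussSum χ lam * (Fintype.card F : ℂ) ^ n),
    if_pos (mem_univ _)]
  ring

private lemma trace_reindex' {m l : Type} [Fintype m] [Fintype l]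
    (e : m ≃ l) (M : Matrix m m F) : (reindex e e M).trace = M.trace := by
  rw [Matrix.trace, Matrix.trace]
  exact Fintype.sum_equiv e.symm _ _ fun i => rfl

private lemma core (χ : MulChar F ℂ) (lam : AddChar F ℂ) (hlam : lam ≠ 1) (m : ℕ) :
    ∑ X : Matrix (Fin m) (Fin m) F, χ X.det * lam X.trace
      = (Fintype.card F : ℂ) ^ (m * (m - 1) / 2) * gaussSum χ lam ^ m := by
  induction m with
  | zero =>
    simp [Matrix.trace]
    exact Fintype.card_eq_one_iff.mpr ⟨0, fun M => Matrix.ext fun i => Fin.elim0 i⟩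
  | succ n ih =>
    classical
    have e : (Fin n ⊕ Fin 1) ≃ Fin (n + 1) := finSumFinEquiv
    have step1 : ∑ X : Matrix (Fin (n+1)) (Fin (n+1)) F, χ X.det * lam X.trace
        = ∑ Y : Matrix (Fin n ⊕ Fin 1) (Fin n ⊕ Fin 1) F, χ Y.det * lam Y.trace := by
      refine (Fintype.sum_equiv (Matrix.reindex e e)
        (fun Y => χ (Matrix.reindex e e Y).det * lam (Matrix.reindex e e Y).trace)
        (fun X => χ X.det * lam X.trace) (fun Y => rfl)).symm.trans ?_
      apply Finset.sum_congr rfl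
      intro Y _
      rw [Matrix.det_reindex_self, trace_reindex']
    have step2 : ∑ Y : Matrix (Fin n ⊕ Fin 1) (Fin n ⊕ Fin 1) F, χ Y.det * lam Y.trace
        = ∑ A : Matrix (Fin n) (Fin n) F, ∑ B : Matrix (Fin n) (Fin 1) F,
            ∑ C : Matrix (Fin 1) (Fin n) F, ∑ D : Matrix (Fin 1) (Fin 1) F,
              χ (fromBlocks A B C D).det * lam (A.trace + D.trace) := by
      rw [← (Fintype.sum_equiv (blockEquiv n)
        (fun p => χ ((blockEquiv n) p : Matrix (Fin n ⊕ Fin 1) (Fin n ⊕ Fin 1) F).det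
          * lam ((blockEquiv n) p : Matrix (Fin n ⊕ Fin 1) (Fin n ⊕ Fin 1) F).trace)
        (fun Y => χ Y.det * lam Y.trace) (fun p => rfl))]
      rw [Fintype.sum_prod_type]
      apply Finset.sum_congr rfl; intro A _
      rw [Fintype.sum_prod_type]
      apply Finset.sum_congr rfl; intro B _
      rw [Fintype.sum_prod_type]
      apply Finset.sum_congr rfl; intro C _
      apply Finset.sum_congr rfl; intro D _
      have : ((blockEquiv n) (A, B, C, D) : Matrix (Fin n ⊕ Fin 1) (Fin n ⊕ Fin 1) F)
          = fromBlocks A B C D := rfl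
      rw [this, trace_fromBlocks']
    rw [step1, step2]
    set g : Matrix (Fin n) (Fin n) F → ℂ := fun A =>
      ∑ B : Matrix (Fin n) (Fin 1) F, ∑ C : Matrix (Fin 1) (Fin n) F,
        ∑ D : Matrix (Fin 1) (Fin 1) F,
          χ (fromBlocks A B C D).det * lam (A.trace + D.trace) with hg
    have split := Finset.sum_filter_add_sum_filter_not (univ : Finset (Matrix (Fin n) (Fin n) F))
      (fun A => IsUnit A.det) g
    rw [show (∑ A : Matrix (Fin n) (Fin n) F, ∑ B : Matrix (Fin n) (Fin 1) F,
        ∑ C : Matrix (Fin 1) (Fin n) F, ∑ D : Matrix (Fin 1) (Fin 1) F,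
          χ (fromBlocks A B C D).det * lam (A.trace + D.trace))
        = ∑ A : Matrix (Fin n) (Fin n) F, g A from rfl, ← split]
    have h2 : ∑ A ∈ univ.filter (fun A => ¬ IsUnit A.det), g A = 0 := by
      refine Finset.sum_eq_zero fun A hA => ?_
      have hA' : ¬ IsUnit A.det := (mem_filter.mp hA).2
      rw [hg]
      simp only []
      rw [Finset.sum_comm]
      exact Finset.sum_eq_zero fun C _ => singular_part χ lam hlam A hA' C
    have h1 : ∑ A ∈ univ.filter (fun A => IsUnit A.det), g A
        = (Fintype.card F : ℂ) ^ n * gaussSum χ lam *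
            ∑ A : Matrix (Fin n) (Fin n) F, χ A.det * lam A.trace := by
      rw [Finset.sum_congr rfl (fun A hA => inv_part χ lam hlam A (mem_filter.mp hA).2),
        ← Finset.mul_sum]
      congr 1
      refine Finset.sum_filter_of_ne fun A _ h => ?_
      by_contra hu
      exact h (by rw [χ.map_nonunit hu, zero_mul])
    rw [h1, h2, add_zero, ih]
    have harith : (n + 1) * ((n + 1) - 1) / 2 = n + n * (n - 1) / 2 := by
      have h3 : (n + 1) * ((n + 1) - 1) / 2 = (n + 1).choose 2 := by
        rw [Nat.choose_two_right]
      rw [h3, Nat.choose_succ_succ, Nat.choose_one_right, Nat.choose_two_right]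
    rw [harith, pow_add]
    ring

end Aux

theorem gauss_sum_GL_invertible_U {n : ℕ} {F : Type} [Field F] [Fintype F] [DecidableEq F]
    (χ : MulChar F ℂ) (lam : AddChar F ℂ) (hlam : lam ≠ 1) (U : GL (Fin n) F) :
    ∑ X : GL (Fin n) F,
        χ ((X : Matrix (Fin n) (Fin n) F).det) *
          lam (((U : Matrix (Fin n) (Fin n) F)ᵀ * (X : Matrix (Fin n) (Fin n) F)).trace) =
      χ (((U : Matrix (Fin n) (Fin n) F).det)⁻¹ ) *
        (Fintype.card F : ℂ) ^ (n * (n - 1) / 2) * (gaussSum χ lam) ^ n := by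
  classical
  set f : Matrix (Fin n) (Fin n) F → ℂ := fun M =>
    χ M.det * lam (((U : Matrix (Fin n) (Fin n) F)ᵀ * M).trace) with hfdef
  have hf0 : ∀ M, ¬ IsUnit (Matrix.det M) → f M = 0 := fun M h => by
    rw [hfdef]; simp only []; rw [χ.map_nonunit h, zero_mul]
  -- step 1 : GL sum to matrix sum
  have hGL : ∑ X : GL (Fin n) F, f (X : Matrix (Fin n) (Fin n) F)
      = ∑ M : Matrix (Fin n) (Fin n) F, f M := by
    rw [← Finset.sum_filter_of_ne (s := univ) (p := fun M => IsUnit (Matrix.det M))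
      (fun M _ h => by by_contra hu; exact h (hf0 M hu))]
    refine Finset.sum_bij (fun (X : GL (Fin n) F) _ => (X : Matrix (Fin n) (Fin n) F))
      ?_ ?_ ?_ ?_
    · intro X _
      exact mem_filter.mpr ⟨mem_univ _, (isUnit_iff_isUnit_det _).mp (Units.isUnit X)⟩
    · intro X _ Y _ h
      exact Units.ext h
    · intro M hM
      exact ⟨M.nonsingInvUnit (mem_filter.mp hM).2, mem_univ _, rfl⟩
    · intro X _
      rfl
  rw [hGL]
  -- step 2 : change of variables
  set V : Matrix (Fin n) (Fin n) F := ((U⁻¹ : GL (Fin n) F) : Matrix (Fin n) (Fin n) F)ᵀ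
    with hV
  have hinvmul : ((U⁻¹ : GL (Fin n) F) : Matrix (Fin n) (Fin n) F)
      * (U : Matrix (Fin n) (Fin n) F) = 1 := by
    exact_mod_cast U.inv_mul
  have hmulinv : (U : Matrix (Fin n) (Fin n) F)
      * ((U⁻¹ : GL (Fin n) F) : Matrix (Fin n) (Fin n) F) = 1 := by
    exact_mod_cast U.mul_inv
  have hUV : (U : Matrix (Fin n) (Fin n) F)ᵀ * V = 1 := by
    rw [hV, ← transpose_mul, hinvmul, transpose_one]
  have hVU : V * (U : Matrix (Fin n) (Fin n) F)ᵀ = 1 := by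
    rw [hV, ← transpose_mul, hmulinv, transpose_one]
  set e : Matrix (Fin n) (Fin n) F ≃ Matrix (Fin n) (Fin n) F :=
    { toFun := fun N => V * N
      invFun := fun N => (U : Matrix (Fin n) (Fin n) F)ᵀ * N
      left_inv := fun N => by
        show (U : Matrix (Fin n) (Fin n) F)ᵀ * (V * N) = N
        rw [← Matrix.mul_assoc, hUV, Matrix.one_mul]
      right_inv := fun N => by
        show V * ((U : Matrix (Fin n) (Fin n) F)ᵀ * N) = N
        rw [← Matrix.mul_assoc, hVU, Matrix.one_mul] } with he
  have hsum : ∑ M : Matrix (Fin n) (Fin n) F, f M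
      = ∑ N : Matrix (Fin n) (Fin n) F, f (V * N) :=
    (Fintype.sum_equiv e (fun N => f (V * N)) f (fun N => rfl)).symm
  have hdetV : χ V.det = χ (((U : Matrix (Fin n) (Fin n) F).det)⁻¹) := by
    congr 1
    rw [hV, Matrix.det_transpose]
    have h := congrArg Matrix.det hinvmul
    rw [Matrix.det_mul, Matrix.det_one] at h
    exact eq_inv_of_mul_eq_one_left h
  have hfVN : ∀ N, f (V * N)
      = χ (((U : Matrix (Fin n) (Fin n) F).det)⁻¹) * (χ N.det * lam N.trace) := by
    intro N
    rw [hfdef]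
    simp only []
    rw [← Matrix.mul_assoc, hUV, Matrix.one_mul, Matrix.det_mul, map_mul χ, hdetV]
    ring
  rw [hsum]
  simp_rw [hfVN]
  rw [← Finset.mul_sum, core χ lam hlam n]
  ring
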